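/- Cost of ignoring the backward link: if a lossless code is designed for the incorrect distribution q(x^n,y^n) = p(x^n)·p(y^n||x^n), then E_p[−log q(X^n,Y^n)] = I(Y^{n-1} → X^n) + H(X^n,Y^n); moreover the sum of the redundancies from ignoring the forward link and the backward link equals I(X^n; Y^n), the redundancy from ignoring both links. -/

import Mathlib

open scoped Classical
open Real

noncomputable section

variable {α β : Type} [Fintype α] [DecidableEq α] [Fintype β] [DecidableEq β]

/-- Probability of the event `E` under the joint pmf `p` of `(X^n, Y^n)`. -/
def pr {n : ℕ} (p : (Fin n → α) → (Fin n → β) → ℝ)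
    (E : (Fin n → α) → (Fin n → β) → Prop) : ℝ :=
  ∑ x, ∑ y, if E x y then p x y else 0

/-- `p` is a probability mass function on pairs of sequences. -/
def IsPmf {n : ℕ} (p : (Fin n → α) → (Fin n → β) → ℝ) : Prop :=
  (∀ x y, 0 ≤ p x y) ∧ ∑ x, ∑ y, p x y = 1

/-- The conditional pmf `p(x_i | x^{i-1}, y^{i-d})` evaluated along `(x, y)`. -/
def condX {n : ℕ} (p : (Fin n → α) → (Fin n → β) → ℝ) (d : ℕ) (i : Fin n)
    (x : Fin n → α) (y : Fin n → β) : ℝ :=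
  pr p (fun x' y' => (∀ j, j < i → x' j = x j) ∧ x' i = x i ∧
      ∀ j : Fin n, (j : ℕ) + d ≤ (i : ℕ) → y' j = y j) /
  pr p (fun x' y' => (∀ j, j < i → x' j = x j) ∧
      ∀ j : Fin n, (j : ℕ) + d ≤ (i : ℕ) → y' j = y j)

/-- The conditional pmf `p(y_i | y^{i-1}, x^{i-d})` evaluated along `(x, y)`. -/
def condY {n : ℕ} (p : (Fin n → α) → (Fin n → β) → ℝ) (d : ℕ) (i : Fin n)
    (x : Fin n → α) (y : Fin n → β) : ℝ :=
  pr p (fun x' y' => (∀ j, j < i → y' j = y j) ∧ y' i = y i ∧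
      ∀ j : Fin n, (j : ℕ) + d ≤ (i : ℕ) → x' j = x j) /
  pr p (fun x' y' => (∀ j, j < i → y' j = y j) ∧
      ∀ j : Fin n, (j : ℕ) + d ≤ (i : ℕ) → x' j = x j)

/-- Causally conditioned pmf `p(x^n || y^{n-d}) = ∏ᵢ p(xᵢ | x^{i-1}, y^{i-d})`. -/
def ccX {n : ℕ} (p : (Fin n → α) → (Fin n → β) → ℝ) (d : ℕ)
    (x : Fin n → α) (y : Fin n → β) : ℝ :=
  ∏ i, condX p d i x y

/-- Causally conditioned pmf `p(y^n || x^{n-d}) = ∏ᵢ p(yᵢ | y^{i-1}, x^{i-d})`. -/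
def ccY {n : ℕ} (p : (Fin n → α) → (Fin n → β) → ℝ) (d : ℕ)
    (x : Fin n → α) (y : Fin n → β) : ℝ :=
  ∏ i, condY p d i x y

/-- Marginal pmf of `X^n`. -/
def pX {n : ℕ} (p : (Fin n → α) → (Fin n → β) → ℝ) (x : Fin n → α) : ℝ := ∑ y, p x y

/-- Marginal pmf of `Y^n`. -/
def pY {n : ℕ} (p : (Fin n → α) → (Fin n → β) → ℝ) (y : Fin n → β) : ℝ := ∑ x, p x y

/-- `H(X^n)` in bits. -/
def HX {n : ℕ} (p : (Fin n → α) → (Fin n → β) → ℝ) : ℝ :=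
  -(∑ x, ∑ y, p x y * Real.logb 2 (pX p x))

/-- `H(Y^n)` in bits. -/
def HY {n : ℕ} (p : (Fin n → α) → (Fin n → β) → ℝ) : ℝ :=
  -(∑ x, ∑ y, p x y * Real.logb 2 (pY p y))

/-- Joint entropy `H(X^n, Y^n)` in bits. -/
def Hjoint {n : ℕ} (p : (Fin n → α) → (Fin n → β) → ℝ) : ℝ :=
  -(∑ x, ∑ y, p x y * Real.logb 2 (p x y))

/-- Conditional entropy `H(X_i | X^{i-1}, Y^{i-d})` in bits. -/
def HcondX {n : ℕ} (p : (Fin n → α) → (Fin n → β) → ℝ) (d : ℕ) (i : Fin n) : ℝ :=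
  -(∑ x, ∑ y, p x y * Real.logb 2 (condX p d i x y))

/-- Conditional entropy `H(Y_i | Y^{i-1}, X^{i-d})` in bits. -/
def HcondY {n : ℕ} (p : (Fin n → α) → (Fin n → β) → ℝ) (d : ℕ) (i : Fin n) : ℝ :=
  -(∑ x, ∑ y, p x y * Real.logb 2 (condY p d i x y))

/-- Causally conditional entropy `H(X^n || Y^{n-d}) = Σᵢ H(Xᵢ | X^{i-1}, Y^{i-d})`. -/
def HccX {n : ℕ} (p : (Fin n → α) → (Fin n → β) → ℝ) (d : ℕ) : ℝ := ∑ i, HcondX p d i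

/-- Causally conditional entropy `H(Y^n || X^{n-d})`. -/
def HccY {n : ℕ} (p : (Fin n → α) → (Fin n → β) → ℝ) (d : ℕ) : ℝ := ∑ i, HcondY p d i

/-- Conditional mutual information `I(Y^i; X_i | X^{i-1})`
(as the expectation of `log (p(xᵢ|x^{i-1},y^i) / p(xᵢ|x^{i-1}))`;
note `condX p n` is `p(xᵢ|x^{i-1})`, conditioning on no `y`'s at all). -/
def cmiYX {n : ℕ} (p : (Fin n → α) → (Fin n → β) → ℝ) (i : Fin n) : ℝ :=
  ∑ x, ∑ y, p x y * Real.logb 2 (condX p 0 i x y / condX p n i x y)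

/-- Conditional mutual information `I(X^i; Y_i | Y^{i-1})`. -/
def cmiXY {n : ℕ} (p : (Fin n → α) → (Fin n → β) → ℝ) (i : Fin n) : ℝ :=
  ∑ x, ∑ y, p x y * Real.logb 2 (condY p 0 i x y / condY p n i x y)

/-- Directed information `I(Y^n → X^n) = Σᵢ I(Y^i; X_i | X^{i-1})`. -/
def dirYX {n : ℕ} (p : (Fin n → α) → (Fin n → β) → ℝ) : ℝ := ∑ i, cmiYX p i

/-- Directed information `I(X^n → Y^n) = Σᵢ I(X^i; Y_i | Y^{i-1})`. -/
def dirXY {n : ℕ} (p : (Fin n → α) → (Fin n → β) → ℝ) : ℝ := ∑ i, cmiXY p i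

/-- Directed information `I(Y^{n-1} → X^n) = Σᵢ I(Y^{i-1}; X_i | X^{i-1})`
(the term for `i = 1` vanishes, so we may sum over all `i`). -/
def dirY1X {n : ℕ} (p : (Fin n → α) → (Fin n → β) → ℝ) : ℝ :=
  ∑ i, ∑ x, ∑ y, p x y * Real.logb 2 (condX p 1 i x y / condX p n i x y)

/-- Mutual information `I(X^n; Y^n)` in bits. -/
def miXY {n : ℕ} (p : (Fin n → α) → (Fin n → β) → ℝ) : ℝ :=
  ∑ x, ∑ y, p x y * Real.logb 2 (p x y / (pX p x * pY p y))

/-!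
Write `F(a, b)` (`prefixProb`) for the probability that `X^a = x^a` and `Y^b = y^b`. Every
conditional pmf in the statement is a ratio of two values of `F`, so the causally conditioned
pmfs telescope: `p(x^n || ∅) = p(x^n)` and `p(x^n || y^{n-1}) · p(y^n || x^n) = p(x^n, y^n)`.
On the support of `p` each log-likelihood in the statement is therefore an affine combination of
`log p(x^n, y^n)`, `log p(x^n)`, `log p(y^n)` and `log p(x^n || y^{n-1})`, and both identities
follow by linearity of expectation.
-/
lemma prod_range_div_of_ne_zero {G₀ : Type*} [CommGroupWithZero G₀] (f : ℕ → G₀)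
    (hf : ∀ k, f k ≠ 0) (n : ℕ) : ∏ i ∈ Finset.range n, f (i + 1) / f i = f n / f 0 := by
  induction n with
  | zero => simp [hf 0]
  | succ m ih => rw [Finset.prod_range_succ, ih, div_mul_div_cancel₀' (hf m)]

lemma prod_fin_div_of_ne_zero {G₀ : Type*} [CommGroupWithZero G₀] (f : ℕ → G₀)
    (hf : ∀ k, f k ≠ 0) (n : ℕ) : ∏ i : Fin n, f (i + 1) / f i = f n / f 0 := by
  rw [Fin.prod_univ_eq_prod_range (fun k => f (k + 1) / f k), prod_range_div_of_ne_zero f hf]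

section Expectation

variable {σ τ : Type*} [Fintype σ] [Fintype τ]

def expect (p f : σ → τ → ℝ) : ℝ := ∑ x, ∑ y, p x y * f x y

lemma expect_congr {p f g : σ → τ → ℝ} (h : ∀ x y, p x y ≠ 0 → f x y = g x y) :
    expect p f = expect p g := by
  refine Finset.sum_congr rfl fun x _ => Finset.sum_congr rfl fun y _ => ?_
  by_cases hxy : p x y = 0
  · simp [hxy]
  · rw [h x y hxy]

lemma expect_add (p f g : σ → τ → ℝ) :
    expect p (fun x y => f x y + g x y) = expect p f + expect p g := by
  simp only [expect, mul_add, Finset.sum_add_distrib]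

lemma expect_sub (p f g : σ → τ → ℝ) :
    expect p (fun x y => f x y - g x y) = expect p f - expect p g := by
  simp only [expect, mul_sub, Finset.sum_sub_distrib]

lemma expect_sum {ι : Type*} (s : Finset ι) (p : σ → τ → ℝ) (f : ι → σ → τ → ℝ) :
    expect p (fun x y => ∑ i ∈ s, f i x y) = ∑ i ∈ s, expect p (f i) := by
  simp only [expect, Finset.mul_sum]
  calc ∑ x, ∑ y, ∑ i ∈ s, p x y * f i x y = ∑ x, ∑ i ∈ s, ∑ y, p x y * f i x y :=
        Finset.sum_congr rfl fun _ _ => Finset.sum_comm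
    _ = ∑ i ∈ s, ∑ x, ∑ y, p x y * f i x y := Finset.sum_comm

end Expectation

section Prefix

variable {α β : Type} [Fintype α] [Fintype β] {n : ℕ} {p : (Fin n → α) → (Fin n → β) → ℝ}

lemma pr_congr (p : (Fin n → α) → (Fin n → β) → ℝ)
    {E E' : (Fin n → α) → (Fin n → β) → Prop} (h : ∀ x y, E x y ↔ E' x y) :
    pr p E = pr p E' := by
  simp only [pr, h]

lemma le_pr (hp : IsPmf p) {E : (Fin n → α) → (Fin n → β) → Prop}
    {x : Fin n → α} {y : Fin n → β} (h : E x y) : p x y ≤ pr p E := by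
  have hnonneg : ∀ x' y', 0 ≤ if E x' y' then p x' y' else 0 := fun x' y' => by
    split_ifs
    exacts [hp.1 x' y', le_rfl]
  calc p x y = if E x y then p x y else 0 := (if_pos h).symm
    _ ≤ ∑ y', if E x y' then p x y' else 0 :=
      Finset.single_le_sum (fun y' _ => hnonneg x y') (Finset.mem_univ y)
    _ ≤ pr p E :=
      Finset.single_le_sum (f := fun x' => ∑ y', if E x' y' then p x' y' else 0)
        (fun x' _ => Finset.sum_nonneg fun y' _ => hnonneg x' y') (Finset.mem_univ x)

def prefixProb (p : (Fin n → α) → (Fin n → β) → ℝ) (x : Fin n → α) (y : Fin n → β)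
    (a b : ℕ) : ℝ :=
  pr p (fun x' y' => (∀ j : Fin n, (j : ℕ) < a → x' j = x j) ∧
    ∀ j : Fin n, (j : ℕ) < b → y' j = y j)

lemma prefixProb_pos (hp : IsPmf p) {x : Fin n → α} {y : Fin n → β} (h : 0 < p x y)
    (a b : ℕ) : 0 < prefixProb p x y a b :=
  h.trans_le (le_pr hp ⟨fun _ _ => rfl, fun _ _ => rfl⟩)

lemma prefixProb_zero_zero (hp : IsPmf p) (x : Fin n → α) (y : Fin n → β) :
    prefixProb p x y 0 0 = 1 := by
  simp [prefixProb, pr, hp.2]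

lemma prefixProb_self_zero (p : (Fin n → α) → (Fin n → β) → ℝ) (x : Fin n → α)
    (y : Fin n → β) : prefixProb p x y n 0 = pX p x := by
  simp [prefixProb, pr, pX, ← funext_iff]

lemma prefixProb_self_self (p : (Fin n → α) → (Fin n → β) → ℝ) (x : Fin n → α)
    (y : Fin n → β) : prefixProb p x y n n = p x y := by
  simp [prefixProb, pr, ← funext_iff, ite_and]

lemma forall_lt_and_eq_iff {γ : Type*} {i : Fin n} {u v : Fin n → γ} :
    ((∀ j, j < i → u j = v j) ∧ u i = v i) ↔ ∀ j : Fin n, (j : ℕ) < i + 1 → u j = v j := by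
  refine ⟨fun ⟨hlt, hi⟩ j hj => ?_, fun h => ⟨fun j hj => h j (by omega), h i (by omega)⟩⟩
  rcases Nat.lt_succ_iff_lt_or_eq.1 hj with hj | hj
  · exact hlt j hj
  · rwa [Fin.ext hj]

lemma forall_add_le_iff {γ : Type*} {d i : ℕ} {u v : Fin n → γ} :
    (∀ j : Fin n, (j : ℕ) + d ≤ i → u j = v j) ↔ ∀ j : Fin n, (j : ℕ) < i + 1 - d → u j = v j :=
  forall_congr' fun j => imp_congr_left (by omega)

/-- The truncated `i + 1 - d` is `0` exactly when the conditioning prefix `y^{i-d}` is empty. -/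
lemma condX_eq_div (p : (Fin n → α) → (Fin n → β) → ℝ) (d : ℕ) (i : Fin n)
    (x : Fin n → α) (y : Fin n → β) :
    condX p d i x y = prefixProb p x y (i + 1) (i + 1 - d) / prefixProb p x y i (i + 1 - d) := by
  unfold condX prefixProb
  congr 1 <;> refine pr_congr p fun x' y' => ?_
  · rw [← and_assoc, forall_lt_and_eq_iff, forall_add_le_iff]
  · rw [forall_add_le_iff]
    rfl

lemma condY_eq_div (p : (Fin n → α) → (Fin n → β) → ℝ) (d : ℕ) (i : Fin n)
    (x : Fin n → α) (y : Fin n → β) :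
    condY p d i x y = prefixProb p x y (i + 1 - d) (i + 1) / prefixProb p x y (i + 1 - d) i := by
  unfold condY prefixProb
  congr 1 <;> refine pr_congr p fun x' y' => ?_
  · rw [← and_assoc, forall_lt_and_eq_iff, forall_add_le_iff, and_comm]
  · rw [forall_add_le_iff, and_comm]
    rfl

end Prefix

section Factorization

variable {α β : Type} [Fintype α] [Fintype β] {n : ℕ} {p : (Fin n → α) → (Fin n → β) → ℝ}
  {x : Fin n → α} {y : Fin n → β}

lemma pX_pos (hp : IsPmf p) (h : 0 < p x y) : 0 < pX p x :=
  h.trans_le (Finset.single_le_sum (fun y' _ => hp.1 x y') (Finset.mem_univ y))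

lemma pY_pos (hp : IsPmf p) (h : 0 < p x y) : 0 < pY p y :=
  h.trans_le (Finset.single_le_sum (fun x' _ => hp.1 x' y) (Finset.mem_univ x))

lemma condX_pos (hp : IsPmf p) (h : 0 < p x y) (d : ℕ) (i : Fin n) : 0 < condX p d i x y := by
  rw [condX_eq_div]
  exact div_pos (prefixProb_pos hp h _ _) (prefixProb_pos hp h _ _)

lemma ccX_pos (hp : IsPmf p) (h : 0 < p x y) (d : ℕ) : 0 < ccX p d x y :=
  Finset.prod_pos fun i _ => condX_pos hp h d i

lemma ccX_self_eq_pX (hp : IsPmf p) (h : 0 < p x y) : ccX p n x y = pX p x := by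
  calc ccX p n x y = ∏ i : Fin n, prefixProb p x y (i + 1) 0 / prefixProb p x y i 0 :=
        Finset.prod_congr rfl fun i _ => by rw [condX_eq_div, Nat.sub_eq_zero_of_le i.isLt]
    _ = prefixProb p x y n 0 / prefixProb p x y 0 0 :=
        prod_fin_div_of_ne_zero (fun k => prefixProb p x y k 0)
          (fun k => (prefixProb_pos hp h k 0).ne') n
    _ = pX p x := by rw [prefixProb_self_zero, prefixProb_zero_zero hp, div_one]

lemma ccX_one_mul_ccY_zero (hp : IsPmf p) (h : 0 < p x y) :
    ccX p 1 x y * ccY p 0 x y = p x y := by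
  calc ccX p 1 x y * ccY p 0 x y
        = ∏ i : Fin n, prefixProb p x y (i + 1) (i + 1) / prefixProb p x y i i := by
        rw [ccX, ccY, ← Finset.prod_mul_distrib]
        refine Finset.prod_congr rfl fun i _ => ?_
        rw [condX_eq_div, condY_eq_div, Nat.add_sub_cancel, Nat.sub_zero,
          div_mul_div_cancel₀' (prefixProb_pos hp h _ _).ne']
    _ = prefixProb p x y n n / prefixProb p x y 0 0 :=
        prod_fin_div_of_ne_zero (fun k => prefixProb p x y k k)
          (fun k => (prefixProb_pos hp h k k).ne') n
    _ = p x y := by rw [prefixProb_self_self, prefixProb_zero_zero hp, div_one]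

lemma logb_pX_mul_ccY_zero (hp : IsPmf p) (h : 0 < p x y) :
    Real.logb 2 (pX p x * ccY p 0 x y) =
      Real.logb 2 (p x y) - Real.logb 2 (ccX p 1 x y) + Real.logb 2 (pX p x) := by
  have hX := ccX_pos hp h 1
  have hY : ccY p 0 x y = p x y / ccX p 1 x y :=
    eq_div_of_mul_eq hX.ne' (by rw [mul_comm, ccX_one_mul_ccY_zero hp h])
  rw [hY, Real.logb_mul (pX_pos hp h).ne' (div_pos h hX).ne', Real.logb_div h.ne' hX.ne']
  ring

lemma sum_logb_condX_one_div_condX_self (hp : IsPmf p) (h : 0 < p x y) :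
    ∑ i, Real.logb 2 (condX p 1 i x y / condX p n i x y) =
      Real.logb 2 (ccX p 1 x y) - Real.logb 2 (pX p x) := by
  rw [← ccX_self_eq_pX hp h, ccX, ccX, Real.logb_prod _ _ fun i _ => (condX_pos hp h 1 i).ne',
    Real.logb_prod _ _ fun i _ => (condX_pos hp h n i).ne', ← Finset.sum_sub_distrib]
  exact Finset.sum_congr rfl fun i _ =>
    Real.logb_div (condX_pos hp h 1 i).ne' (condX_pos hp h n i).ne'

lemma logb_div_pX_mul_pY (hp : IsPmf p) (h : 0 < p x y) :
    Real.logb 2 (p x y / (pX p x * pY p y)) =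
      Real.logb 2 (p x y) - Real.logb 2 (pX p x) - Real.logb 2 (pY p y) := by
  rw [Real.logb_div h.ne' (mul_pos (pX_pos hp h) (pY_pos hp h)).ne',
    Real.logb_mul (pX_pos hp h).ne' (pY_pos hp h).ne']
  ring

end Factorization

theorem cost_of_ignoring_backward_link_general {n : ℕ}
    (p : (Fin n → α) → (Fin n → β) → ℝ) (hp : IsPmf p) :
    -(∑ x, ∑ y, p x y * Real.logb 2 (pX p x * ccY p 0 x y)) =
        dirY1X p + Hjoint p ∧
    (-(∑ x, ∑ y, p x y * Real.logb 2 (pY p y * ccX p 1 x y)) - Hjoint p) +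
        (-(∑ x, ∑ y, p x y * Real.logb 2 (pX p x * ccY p 0 x y)) - Hjoint p) =
      miXY p := by
  have pos : ∀ {x y}, p x y ≠ 0 → 0 < p x y := fun h => (hp.1 _ _).lt_of_ne' h
  have hH : Hjoint p = -expect p fun x y => Real.logb 2 (p x y) := rfl
  have hback : ∑ x, ∑ y, p x y * Real.logb 2 (pX p x * ccY p 0 x y) =
      (expect p fun x y => Real.logb 2 (p x y)) - (expect p fun x y => Real.logb 2 (ccX p 1 x y)) +
        expect p fun x y => Real.logb 2 (pX p x) := by
    rw [← expect_sub, ← expect_add]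
    exact expect_congr fun x y hxy => logb_pX_mul_ccY_zero hp (pos hxy)
  have hfwd : ∑ x, ∑ y, p x y * Real.logb 2 (pY p y * ccX p 1 x y) =
      (expect p fun x y => Real.logb 2 (pY p y)) +
        expect p fun x y => Real.logb 2 (ccX p 1 x y) := by
    rw [← expect_add]
    exact expect_congr fun x y hxy =>
      Real.logb_mul (pY_pos hp (pos hxy)).ne' (ccX_pos hp (pos hxy) 1).ne'
  have hdir : dirY1X p = (expect p fun x y => Real.logb 2 (ccX p 1 x y)) -
      expect p fun x y => Real.logb 2 (pX p x) := by
    rw [← expect_sub]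
    calc dirY1X p = expect p fun x y => ∑ i, Real.logb 2 (condX p 1 i x y / condX p n i x y) :=
          (expect_sum _ _ _).symm
      _ = _ := expect_congr fun x y hxy => sum_logb_condX_one_div_condX_self hp (pos hxy)
  have hmi : miXY p = (expect p fun x y => Real.logb 2 (p x y)) -
      (expect p fun x y => Real.logb 2 (pX p x)) - expect p fun x y => Real.logb 2 (pY p y) := by
    rw [← expect_sub, ← expect_sub, miXY]
    exact expect_congr fun x y hxy => logb_div_pX_mul_pY hp (pos hxy)
  constructor <;> linarith

/-- cost of ignoring the backward link. If the code is designed for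
the incorrect distribution `q(x^n,y^n) = p(x^n) p(y^n||x^n)`, then
`E_p[−log q(X^n,Y^n)] = I(Y^{n-1} → X^n) + H(X^n,Y^n)`; moreover the redundancies
from ignoring the forward link and the backward link add up to `I(X^n;Y^n)`, the
redundancy from ignoring both links (the conservation law, operationally). -/
theorem cost_of_ignoring_backward_link {n : ℕ}
    (p : (Fin n → α) → (Fin n → β) → ℝ) (hp : IsPmf p)
    (hq : ∀ x y, 0 < p x y → 0 < pX p x * ccY p 0 x y)
    (hq' : ∀ x y, 0 < p x y → 0 < pY p y * ccX p 1 x y) :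
    -(∑ x, ∑ y, p x y * Real.logb 2 (pX p x * ccY p 0 x y)) =
        dirY1X p + Hjoint p ∧
    (-(∑ x, ∑ y, p x y * Real.logb 2 (pY p y * ccX p 1 x y)) - Hjoint p) +
        (-(∑ x, ∑ y, p x y * Real.logb 2 (pX p x * ccY p 0 x y)) - Hjoint p) =
      miXY p :=
  cost_of_ignoring_backward_link_general p hp
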